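/- Let L be a first-order language with an n-ary relation symbol interpreted on a simple pragmatic structure A = (D, (R_i), P) with empty set of primary sentences P = ∅, and let R = (R₁, R₂, R₃) be the partial relation of A interpreting that symbol. Then for every tuple d ∈ R₃ (naming its components by constants of L interpreted by the corresponding elements of D), the atomic sentence asserting that d stands in the relation and its negation are both pragmatically true in A; hence pragmatic truth in a simple pragmatic structure does not exclude the pragmatic truth of a sentence's negation. -/

import Mathlib

/-! When `P = ∅`, the two extreme completions of `A`, reading each partial relation as
`R₁ ∪ R₃` (the complement of `R₂`) or as `R₁`, are both `A`-normal. A tuple of `R₃` satisfies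
the relation in the first and fails it in the second. -/

open FirstOrder Language

universe u

/-- A partial `n`-ary relation on `D`: a triple of pairwise disjoint subsets of `Dⁿ`
whose union is all of `Dⁿ` (known to hold, known not to hold, unknown). -/
structure PartialRel (D : Type u) (n : ℕ) where
  R1 : Set (Fin n → D)
  R2 : Set (Fin n → D)
  R3 : Set (Fin n → D)
  disj12 : Disjoint R1 R2
  disj13 : Disjoint R1 R3
  disj23 : Disjoint R2 R3
  union_eq : R1 ∪ R2 ∪ R3 = Set.univ

/-- A simple pragmatic structure for a first-order language `L` on domain `D`:
a family of partial relations interpreting the relation symbols, an interpretation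
of the function symbols, and a set `P` of primary sentences. -/
structure SimplePragmatic (L : Language) (D : Type u) where
  rel : ∀ ⦃n : ℕ⦄, L.Relations n → PartialRel D n
  fn : ∀ ⦃n : ℕ⦄, L.Functions n → (Fin n → D) → D
  P : Set L.Sentence

/-- A total structure `B` on `D` is `A`-normal if it interprets the function symbols as `A`
does, its total relations expand the partial relations of `A` (containing `R1` and disjoint
from `R2`), and every primary sentence of `A` is true in `B`. -/
def ANormal {L : Language} {D : Type u} (A : SimplePragmatic L D) (B : L.Structure D) : Prop :=
  (∀ (n : ℕ) (f : L.Functions n) (x : Fin n → D), B.funMap f x = A.fn f x) ∧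
  (∀ (n : ℕ) (r : L.Relations n), (A.rel r).R1 ⊆ {x | B.RelMap r x}) ∧
  (∀ (n : ℕ) (r : L.Relations n), (A.rel r).R2 ∩ {x | B.RelMap r x} = ∅) ∧
  (∀ φ ∈ A.P, @Sentence.Realize L D B φ)

/-- A sentence is pragmatically true in `A` iff it is true in at least one `A`-normal
structure. -/
def PragTrue {L : Language} {D : Type u} (A : SimplePragmatic L D) (φ : L.Sentence) : Prop :=
  ∃ B : L.Structure D, ANormal A B ∧ @Sentence.Realize L D B φ

/-- A sentence is pragmatically false in `A` iff it is true in no `A`-normal structure. -/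
def PragFalse {L : Language} {D : Type u} (A : SimplePragmatic L D) (φ : L.Sentence) : Prop :=
  ¬ PragTrue A φ

namespace PartialRel

variable {D : Type u} {n : ℕ} (R : PartialRel D n)

theorem R1_subset_compl_R2 : R.R1 ⊆ R.R2ᶜ :=
  R.disj12.subset_compl_right

theorem R3_subset_compl_R2 : R.R3 ⊆ R.R2ᶜ :=
  R.disj23.symm.subset_compl_right

theorem R3_subset_compl_R1 : R.R3 ⊆ R.R1ᶜ :=
  R.disj13.symm.subset_compl_right

end PartialRel

namespace SimplePragmatic

variable {L : Language} {D : Type u}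

abbrev structureOf (A : SimplePragmatic L D) (S : ∀ ⦃n : ℕ⦄, L.Relations n → Set (Fin n → D)) :
    L.Structure D where
  funMap f x := A.fn f x
  RelMap r x := x ∈ S r

theorem aNormal_structureOf {A : SimplePragmatic L D} (hP : A.P = ∅)
    {S : ∀ ⦃n : ℕ⦄, L.Relations n → Set (Fin n → D)}
    (h1 : ∀ n (r : L.Relations n), (A.rel r).R1 ⊆ S r)
    (h2 : ∀ n (r : L.Relations n), Disjoint (A.rel r).R2 (S r)) :
    ANormal A (A.structureOf S) :=
  ⟨fun _ _ _ => rfl, h1, fun n r => (h2 n r).inter_eq, by simp [hP]⟩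

end SimplePragmatic

theorem realize_rel_constants_iff {L : Language} {M : Type*} [L.Structure M] {n : ℕ}
    (r : L.Relations n) {c : Fin n → L.Constants} {d : Fin n → M} (hc : ∀ i, (c i : M) = d i) :
    M ⊨ r.formula (fun i => (c i).term) ↔ Structure.RelMap r d := by
  simp only [Sentence.Realize, Formula.realize_rel, Term.realize_constants, hc]

theorem stmt3_general {L : Language} {D : Type u}
    (A : SimplePragmatic L D)
    (hP : A.P = ∅)
    {n : ℕ} (r : L.Relations n)
    (c : Fin n → L.Constants) (d : Fin n → D)
    (hc : ∀ i, A.fn (c i) (fun x => x.elim0) = d i)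
    (hd : d ∈ (A.rel r).R3) :
    PragTrue A (r.formula fun i => (c i).term) ∧
    PragTrue A (∼(r.formula fun i => (c i).term)) := by
  let upper := A.structureOf fun _ r => (A.rel r).R2ᶜ
  let lower := A.structureOf fun _ r => (A.rel r).R1
  have hc' : ∀ S i, @constantMap L D (A.structureOf S) (c i) = d i :=
    fun S i => (@funMap_eq_coe_constants L D (A.structureOf S) _ _).symm.trans (hc i)
  refine ⟨⟨upper, ?_, ?_⟩, ⟨lower, ?_, ?_⟩⟩
  · exact SimplePragmatic.aNormal_structureOf hP (fun _ r => (A.rel r).R1_subset_compl_R2)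
      (fun _ _ => disjoint_compl_right)
  · exact (@realize_rel_constants_iff L D upper n r c d (hc' _)).mpr
      ((A.rel r).R3_subset_compl_R2 hd)
  · exact SimplePragmatic.aNormal_structureOf hP (fun _ _ => subset_rfl)
      (fun _ r => (A.rel r).disj12.symm)
  · rw [Sentence.realize_not, @realize_rel_constants_iff L D lower n r c d (hc' _)]
    exact (A.rel r).R3_subset_compl_R1 hd

/-- if `P = ∅` and the tuple `d` (named by constants `c` of `L`) lies in the
unknown part `R3` of the partial relation interpreting `r`, then both the atomic sentence
`r(c)` and its negation are pragmatically true in `A`. -/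
theorem stmt3 {L : Language} {D : Type u} [Nonempty D]
    (A : SimplePragmatic L D)
    (hP : A.P = ∅)
    {n : ℕ} (r : L.Relations n)
    (c : Fin n → L.Constants) (d : Fin n → D)
    (hc : ∀ i, A.fn (c i) (fun x => x.elim0) = d i)
    (hd : d ∈ (A.rel r).R3) :
    PragTrue A (r.formula fun i => (c i).term) ∧
    PragTrue A (∼(r.formula fun i => (c i).term)) :=
  stmt3_general A hP r c d hc hd
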